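/- Let 𝔤 be a complex semisimple Lie algebra whose grading determined by a nonempty subset Σ of the simple roots is of Monge type, with dim 𝔤₋₁ > 2, and let 𝔶 ⊆ 𝔤₋₁ be a nonzero abelian subalgebra of codimension 1 with dim 𝔤₋₂ = dim 𝔶. Then 𝔶 is invariant under the adjoint action of 𝔤₀ on 𝔤₋₁, and there exists a 1-dimensional 𝔤₀-invariant subspace 𝔵 ⊆ 𝔤₋₁ such that 𝔤₋₁ = 𝔵 ⊕ 𝔶. -/

import Mathlib

open scoped RealInnerProductSpace BigOperators Classical

/-- A reduced crystallographic root system in a real inner product space,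
together with a chosen base of simple roots and the coordinates of each
root with respect to the base. -/
structure RootSystemBase (V : Type*) [NormedAddCommGroup V] [InnerProductSpace ℝ V] where
  /-- the set of roots -/
  Δ : Finset V
  /-- the set of simple roots (the base) -/
  Δ0 : Finset V
  base_sub : Δ0 ⊆ Δ
  ne_zero : ∀ β ∈ Δ, β ≠ (0 : V)
  indep : LinearIndependent ℝ (fun a : ↥Δ0 => (a : V))
  neg_mem : ∀ β ∈ Δ, -β ∈ Δ
  /-- `coeff β α` is the coefficient `n_α` of the simple root `α` in `β = ∑ n_α • α` -/
  coeff : V → V → ℤ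
  coeff_spec : ∀ β ∈ Δ, β = ∑ α ∈ Δ0, (coeff β α : ℝ) • α
  coeff_sign : ∀ β ∈ Δ, (∀ α ∈ Δ0, 0 ≤ coeff β α) ∨ (∀ α ∈ Δ0, coeff β α ≤ 0)
  crystal : ∀ α ∈ Δ, ∀ β ∈ Δ, ∃ k : ℤ, 2 * ⟪β, α⟫ / ⟪α, α⟫ = (k : ℝ)
  reflect_mem : ∀ α ∈ Δ, ∀ β ∈ Δ, β - (2 * ⟪β, α⟫ / ⟪α, α⟫) • α ∈ Δ
  reduced : ∀ α ∈ Δ, (2 : ℝ) • α ∉ Δ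

namespace RootSystemBase

variable {V : Type*} [NormedAddCommGroup V] [InnerProductSpace ℝ V]

variable (R : RootSystemBase V)

/-- The height `ht_Σ(β)` of a root `β` relative to a subset `Sg` of the simple roots. -/
def ht (Sg : Finset V) (β : V) : ℤ := ∑ α ∈ Sg, R.coeff β α

/-- positive roots -/
def IsPos (β : V) : Prop := β ∈ R.Δ ∧ ∀ α ∈ R.Δ0, 0 ≤ R.coeff β α

/-- negative roots -/
def IsNeg (β : V) : Prop := β ∈ R.Δ ∧ ∀ α ∈ R.Δ0, R.coeff β α ≤ 0

/-- Irreducibility of the root system (the Dynkin diagram is connected); this is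
equivalent to the corresponding complex Lie algebra being simple. -/
def Irred : Prop :=
  ¬ ∃ S : Finset V, S ⊆ R.Δ0 ∧ S.Nonempty ∧ S ≠ R.Δ0 ∧
      ∀ a ∈ S, ∀ b ∈ R.Δ0, b ∉ S → ⟪a, b⟫ = 0

/-- Adjacency of two (simple) roots in the Dynkin diagram. -/
def Adj (a b : V) : Prop := a ≠ b ∧ ⟪a, b⟫ ≠ 0

end RootSystemBase

/-- The root space decomposition data of a complex semisimple Lie algebra `L` with
root system `base`: a Cartan subalgebra `H`, one-dimensional root spaces `rs β`,
and the standard bracket relations among them. -/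
structure GradedLieData (V : Type*) [NormedAddCommGroup V] [InnerProductSpace ℝ V]
    (L : Type*) [LieRing L] [LieAlgebra ℂ L] where
  /-- the underlying root system with base -/
  base : RootSystemBase V
  /-- the Cartan subalgebra -/
  H : Submodule ℂ L
  /-- the root spaces -/
  rs : V → Submodule ℂ L
  rs_dim : ∀ β ∈ base.Δ, Module.finrank ℂ ↥(rs β) = 1
  rs_bot : ∀ v : V, v ∉ base.Δ → rs v = ⊥
  sup_eq_top : H ⊔ (⨆ β ∈ base.Δ, rs β) = ⊤
  h_indep : Disjoint H (⨆ β ∈ base.Δ, rs β)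
  rs_indep : ∀ β ∈ base.Δ, Disjoint (rs β) (H ⊔ ⨆ γ ∈ base.Δ.erase β, rs γ)
  /-- `toH v` is the element of the Cartan subalgebra representing `v` via the Killing
  form -/
  toH : V → L
  toH_mem : ∀ v : V, toH v ∈ H
  toH_add : ∀ u v : V, toH (u + v) = toH u + toH v
  H_span : H = Submodule.span ℂ (toH '' ↑base.Δ0)
  br_toH : ∀ v : V, ∀ β ∈ base.Δ, ∀ x ∈ rs β, ⁅toH v, x⁆ = ((⟪β, v⟫ : ℝ) : ℂ) • x
  br_h_h : ∀ h ∈ H, ∀ h' ∈ H, ⁅h, h'⁆ = (0 : L)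
  br_h_rs : ∀ β ∈ base.Δ, ∀ h ∈ H, ∀ x ∈ rs β, ⁅h, x⁆ ∈ rs β
  br_rs_mem : ∀ β ∈ base.Δ, ∀ γ ∈ base.Δ, β + γ ∈ base.Δ →
      ∀ x ∈ rs β, ∀ y ∈ rs γ, ⁅x, y⁆ ∈ rs (β + γ)
  br_rs_zero : ∀ β ∈ base.Δ, ∀ γ ∈ base.Δ, β + γ ∉ base.Δ → β + γ ≠ 0 →
      ∀ x ∈ rs β, ∀ y ∈ rs γ, ⁅x, y⁆ = (0 : L)
  br_rs_opp : ∀ β ∈ base.Δ, ∀ x ∈ rs β, ∀ y ∈ rs (-β),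
      ⁅x, y⁆ ∈ Submodule.span ℂ ({toH β} : Set L)
  br_nondeg : ∀ β ∈ base.Δ, ∀ γ ∈ base.Δ, β + γ ∈ base.Δ →
      ∀ x ∈ rs β, ∀ y ∈ rs γ, ⁅x, y⁆ = (0 : L) → x = 0 ∨ y = 0

namespace GradedLieData

variable {V : Type*} [NormedAddCommGroup V] [InnerProductSpace ℝ V]
variable {L : Type*} [LieRing L] [LieAlgebra ℂ L]

variable (G : GradedLieData V L)

/-- The grading component `𝔤ⱼ` of the grading of `L` determined by the subset `Sg`
of the simple roots. -/
def g (Sg : Finset V) (j : ℤ) : Submodule ℂ L :=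
  if j = 0 then G.H ⊔ ⨆ β ∈ G.base.Δ.filter (fun β => G.base.ht Sg β = 0), G.rs β
  else ⨆ β ∈ G.base.Δ.filter (fun β => G.base.ht Sg β = j), G.rs β

/-- The grading of `L` determined by `Sg` is of *Monge type*: the component `𝔤₋₁`
contains a nonzero abelian subalgebra `Y` of codimension one with
`dim 𝔤₋₂ = dim Y`. -/
def Monge (Sg : Finset V) : Prop :=
  ∃ Y : Submodule ℂ L, Y ≤ G.g Sg (-1) ∧ Y ≠ ⊥ ∧
    (∀ a ∈ Y, ∀ b ∈ Y, ⁅a, b⁆ = (0 : L)) ∧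
    Module.finrank ℂ ↥Y + 1 = Module.finrank ℂ ↥(G.g Sg (-1)) ∧
    Module.finrank ℂ ↥(G.g Sg (-2)) = Module.finrank ℂ ↥Y

end GradedLieData

/-! Pick `x ∈ 𝔤₋₁ \ 𝔶`. As `𝔶` is abelian, every bracket of two elements of `𝔤₋₁ = 𝔶 ⊕ ℂx` lies
in `[x, 𝔶]`; as every root of `Σ`-height `-2` is a sum of two roots of height `-1`, this gives
`𝔤₋₂ ⊆ [x, 𝔶]`, so `dim [x, 𝔶] ≥ dim 𝔶 ≥ 2`. If some `u ∈ 𝔤₀` moved `y ∈ 𝔶` out of `𝔶`, the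
Jacobi identity for `[u, [y, y']] = 0` would force `[x, 𝔶] ⊆ ℂ[x, y]`.

Being invariant under the Cartan subalgebra, `𝔶` is a sum of root spaces of height `-1`, and by
counting dimensions exactly one of them, `𝔤_μ`, is missing. This is the complement `𝔵`: if a root
`α` of height `0` had `α + μ` a root, then `0 ≠ [𝔤_{-α}, 𝔤_{α+μ}] ⊆ 𝔤_μ ∩ 𝔶`. -/

namespace RootSystemBase

variable {V : Type*} [NormedAddCommGroup V] [InnerProductSpace ℝ V]
variable (R : RootSystemBase V)

lemma coeff_eq_of_eq_sum {β : V} (hβ : β ∈ R.Δ) {f : V → ℝ}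
    (h : β = ∑ a ∈ R.Δ0, f a • a) : ∀ a ∈ R.Δ0, (R.coeff β a : ℝ) = f a := by
  have hzero : ∑ a : ↥R.Δ0, ((R.coeff β a : ℝ) - f a) • (a : V) = 0 := by
    rw [Finset.sum_coe_sort R.Δ0 (fun a => ((R.coeff β a : ℝ) - f a) • a)]
    simp only [sub_smul, Finset.sum_sub_distrib, ← R.coeff_spec β hβ, ← h, sub_self]
  intro a ha
  exact sub_eq_zero.mp (Fintype.linearIndependent_iff.mp R.indep _ hzero ⟨a, ha⟩)

lemma coeff_simple {a b : V} (ha : a ∈ R.Δ0) (hb : b ∈ R.Δ0) :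
    R.coeff a b = if b = a then 1 else 0 := by
  have h := R.coeff_eq_of_eq_sum (R.base_sub ha) (f := fun b => if b = a then 1 else 0)
    (by simp [ite_smul, ha]) b hb
  split_ifs at h ⊢ <;> exact_mod_cast h

lemma coeff_add {β γ : V} (hβ : β ∈ R.Δ) (hγ : γ ∈ R.Δ) (hβγ : β + γ ∈ R.Δ) :
    ∀ a ∈ R.Δ0, R.coeff (β + γ) a = R.coeff β a + R.coeff γ a := by
  intro a ha
  have h := R.coeff_eq_of_eq_sum hβγ (f := fun a => (R.coeff β a : ℝ) + R.coeff γ a)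
    (by simp only [add_smul, Finset.sum_add_distrib, ← R.coeff_spec β hβ, ← R.coeff_spec γ hγ])
    a ha
  exact_mod_cast h

lemma coeff_neg {β : V} (hβ : β ∈ R.Δ) : ∀ a ∈ R.Δ0, R.coeff (-β) a = -R.coeff β a := by
  intro a ha
  have h := R.coeff_eq_of_eq_sum (R.neg_mem β hβ) (f := fun a => -(R.coeff β a : ℝ))
    (by simp only [neg_smul, Finset.sum_neg_distrib, ← R.coeff_spec β hβ]) a ha
  exact_mod_cast h

def IsSumOfTwoOfHt (Sg : Finset V) (i : ℤ) (δ : V) : Prop :=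
  ∃ β ∈ R.Δ, ∃ γ ∈ R.Δ, R.ht Sg β = i ∧ R.ht Sg γ = i ∧ β + γ = δ

variable {Sg : Finset V}

lemma ht_add (hSg : Sg ⊆ R.Δ0) {β γ : V} (hβ : β ∈ R.Δ) (hγ : γ ∈ R.Δ)
    (hβγ : β + γ ∈ R.Δ) : R.ht Sg (β + γ) = R.ht Sg β + R.ht Sg γ := by
  rw [ht, ht, ht, ← Finset.sum_add_distrib]
  exact Finset.sum_congr rfl fun a ha => R.coeff_add hβ hγ hβγ a (hSg ha)

lemma ht_sub (hSg : Sg ⊆ R.Δ0) {β γ : V} (hβ : β ∈ R.Δ) (hγ : γ ∈ R.Δ)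
    (hβγ : β - γ ∈ R.Δ) : R.ht Sg (β - γ) = R.ht Sg β - R.ht Sg γ := by
  have h := R.ht_add hSg hβγ hγ (by rwa [sub_add_cancel])
  rw [sub_add_cancel] at h
  omega

lemma ht_neg (hSg : Sg ⊆ R.Δ0) {β : V} (hβ : β ∈ R.Δ) : R.ht Sg (-β) = -R.ht Sg β := by
  rw [ht, ht, ← Finset.sum_neg_distrib]
  exact Finset.sum_congr rfl fun a ha => R.coeff_neg hβ a (hSg ha)

lemma ht_simple (hSg : Sg ⊆ R.Δ0) {a : V} (ha : a ∈ R.Δ0) :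
    R.ht Sg a = if a ∈ Sg then 1 else 0 := by
  rw [ht, Finset.sum_congr rfl fun b hb => R.coeff_simple ha (hSg hb)]
  simp

lemma coeff_nonneg_of_ht_pos (hSg : Sg ⊆ R.Δ0) {β : V} (hβ : β ∈ R.Δ) (hpos : 0 < R.ht Sg β) :
    ∀ a ∈ R.Δ0, 0 ≤ R.coeff β a := by
  refine (R.coeff_sign β hβ).resolve_right fun hneg => ?_
  have : R.ht Sg β ≤ 0 := Finset.sum_nonpos fun a ha => hneg a (hSg ha)
  omega

lemma inner_self_pos_of_mem {β : V} (hβ : β ∈ R.Δ) : 0 < ⟪β, β⟫ :=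
  real_inner_self_pos.mpr (R.ne_zero β hβ)

lemma exists_simple_inner_pos {δ : V} (hδ : δ ∈ R.Δ) (hpos : ∀ a ∈ R.Δ0, 0 ≤ R.coeff δ a) :
    ∃ a ∈ R.Δ0, 0 < ⟪δ, a⟫ := by
  have hsum : ∑ a ∈ R.Δ0, (0 : ℝ) < ∑ a ∈ R.Δ0, (R.coeff δ a : ℝ) * ⟪δ, a⟫ := by
    simp_rw [← real_inner_smul_right, ← inner_sum, ← R.coeff_spec δ hδ, Finset.sum_const_zero]
    exact R.inner_self_pos_of_mem hδ
  obtain ⟨a, ha, hlt⟩ := Finset.exists_lt_of_sum_lt hsum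
  exact ⟨a, ha, pos_of_mul_pos_right hlt (by exact_mod_cast hpos a ha)⟩

lemma exists_two_inner_eq_int_mul {α β : V} (hα : α ∈ R.Δ) (hβ : β ∈ R.Δ) :
    ∃ k : ℤ, 2 * ⟪β, α⟫ = k * ⟪α, α⟫ ∧ β - (k : ℝ) • α ∈ R.Δ := by
  obtain ⟨k, hk⟩ := R.crystal α hα β hβ
  refine ⟨k, ?_, hk ▸ R.reflect_mem α hα β hβ⟩
  rw [← hk, div_mul_cancel₀ _ (R.inner_self_pos_of_mem hα).ne']

lemma sub_mem_of_inner_pos {δ α : V} (hδ : δ ∈ R.Δ) (hα : α ∈ R.Δ) (hne : δ ≠ α)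
    (hpos : 0 < ⟪δ, α⟫) : δ - α ∈ R.Δ := by
  obtain ⟨k, hk, hkmem⟩ := R.exists_two_inner_eq_int_mul hα hδ
  obtain ⟨l, hl, hlmem⟩ := R.exists_two_inner_eq_int_mul hδ hα
  have hαα := R.inner_self_pos_of_mem hα
  have hδδ := R.inner_self_pos_of_mem hδ
  rw [real_inner_comm] at hl
  have hk0 : 0 < k := by
    have : (0 : ℝ) < k * ⟪α, α⟫ := by rw [← hk]; positivity
    exact_mod_cast pos_of_mul_pos_left this hαα.le
  have hl0 : 0 < l := by
    have : (0 : ℝ) < l * ⟪δ, δ⟫ := by rw [← hl]; positivity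
    exact_mod_cast pos_of_mul_pos_left this hδδ.le
  by_cases hk1 : k = 1
  · simpa [hk1] using hkmem
  by_cases hl1 : l = 1
  · simpa [hl1] using R.neg_mem _ hlmem
  -- Cauchy–Schwarz gives `k * l ≤ 4`, so `k = l = 2`, which forces `δ = α`.
  have hkl : k * l ≤ 4 := by
    have hcs := real_inner_mul_inner_self_le δ α
    have : (k : ℝ) * l * (⟪α, α⟫ * ⟪δ, δ⟫) ≤ 4 * (⟪α, α⟫ * ⟪δ, δ⟫) := by nlinarith
    exact_mod_cast le_of_mul_le_mul_right this (by positivity)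
  obtain ⟨rfl, rfl⟩ : k = 2 ∧ l = 2 := by
    have : 2 ≤ k := by omega
    have : 2 ≤ l := by omega
    constructor <;> nlinarith
  have hzero : ⟪δ - α, δ - α⟫ = 0 := by
    rw [inner_sub_sub_self]
    push_cast at hk hl
    linarith [real_inner_comm α δ]
  exact absurd (sub_eq_zero.mp (inner_self_eq_zero.mp hzero)) hne

lemma add_mem_of_inner_neg {δ α : V} (hδ : δ ∈ R.Δ) (hα : α ∈ R.Δ) (hne : δ ≠ -α)
    (hneg : ⟪δ, α⟫ < 0) : δ + α ∈ R.Δ := by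
  simpa using R.sub_mem_of_inner_pos hδ (R.neg_mem α hα) hne (by rwa [inner_neg_right, neg_pos])

lemma isSumOfTwoOfHt_one_of_sub (hSg : Sg ⊆ R.Δ0) {δ a : V} (hδ : δ ∈ R.Δ) (ha : a ∈ R.Δ)
    (hδa : δ - a ∈ R.Δ) (hδ2 : R.ht Sg δ = 2) (ha0 : R.ht Sg a = 0)
    (hsum : R.IsSumOfTwoOfHt Sg 1 (δ - a)) : R.IsSumOfTwoOfHt Sg 1 δ := by
  obtain ⟨β, hβ, γ, hγ, hβ1, hγ1, hβγ⟩ := hsum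
  have of_inner_pos : ∀ ε ∈ R.Δ, R.ht Sg ε = 1 → 0 < ⟪δ, ε⟫ →
      R.IsSumOfTwoOfHt Sg 1 δ := by
    intro ε hε hε1 hpos
    have hδε := R.sub_mem_of_inner_pos hδ hε (by rintro rfl; omega) hpos
    exact ⟨ε, hε, δ - ε, hδε, hε1, by rw [R.ht_sub hSg hδ hε hδε]; omega, add_sub_cancel ε δ⟩
  have of_inner_neg : ∀ ε ∈ R.Δ, ∀ ζ ∈ R.Δ, R.ht Sg ε = 1 → R.ht Sg ζ = 1 → ε + ζ = δ - a →
      ⟪ε, a⟫ < 0 → R.IsSumOfTwoOfHt Sg 1 δ := by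
    intro ε hε ζ hζ hε1 hζ1 hεζ hneg
    have hne : ε ≠ -a := by rintro rfl; rw [R.ht_neg hSg ha] at hε1; omega
    have hεa := R.add_mem_of_inner_neg hε ha hne hneg
    exact ⟨ε + a, hεa, ζ, hζ, by rw [R.ht_add hSg hε ha hεa]; omega, hζ1,
      by rw [add_right_comm, hεζ, sub_add_cancel]⟩
  rcases lt_or_ge 0 ⟪δ, β⟫ with h | hδβ
  · exact of_inner_pos β hβ hβ1 h
  rcases lt_or_ge 0 ⟪δ, γ⟫ with h | hδγ
  · exact of_inner_pos γ hγ hγ1 h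
  rcases lt_or_ge ⟪β, a⟫ 0 with h | hβa
  · exact of_inner_neg β hβ γ hγ hβ1 hγ1 hβγ h
  rcases lt_or_ge ⟪γ, a⟫ 0 with h | hγa
  · exact of_inner_neg γ hγ β hβ hγ1 hβ1 (by rw [add_comm, hβγ]) h
  -- Otherwise `0 ≥ ⟪δ, β + γ⟫ = ⟪a, β + γ⟫ + ‖β + γ‖² > 0`.
  exfalso
  have hpos : 0 < ⟪β + γ, β + γ⟫ := hβγ ▸ R.inner_self_pos_of_mem hδa
  have hδ' : δ = a + (β + γ) := by rw [hβγ]; abel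
  have hexp : ⟪δ, β + γ⟫ = ⟪a, β + γ⟫ + ⟪β + γ, β + γ⟫ := by rw [hδ', inner_add_left]
  rw [inner_add_right, inner_add_right] at hexp
  linarith [real_inner_comm a β, real_inner_comm a γ]

theorem isSumOfTwoOfHt_one_of_ht_two (hSg : Sg ⊆ R.Δ0) {δ : V} (hδ : δ ∈ R.Δ)
    (h2 : R.ht Sg δ = 2) : R.IsSumOfTwoOfHt Sg 1 δ := by
  induction hn : (R.ht R.Δ0 δ).toNat using Nat.strong_induction_on generalizing δ with
  | _ n ih =>
  have hpos := R.coeff_nonneg_of_ht_pos hSg hδ (by omega)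
  have hle : R.ht Sg δ ≤ R.ht R.Δ0 δ :=
    Finset.sum_le_sum_of_subset_of_nonneg hSg fun a ha _ => hpos a ha
  obtain ⟨a, ha0, hδa⟩ := R.exists_simple_inner_pos hδ hpos
  have ha := R.base_sub ha0
  have ha_ht := R.ht_simple hSg ha0
  have hsub := R.sub_mem_of_inner_pos hδ ha (by rintro rfl; split_ifs at ha_ht <;> omega) hδa
  have hsub_ht := R.ht_sub hSg hδ ha hsub
  by_cases haSg : a ∈ Sg
  · rw [if_pos haSg] at ha_ht
    exact ⟨δ - a, hsub, a, ha, by omega, ha_ht, sub_add_cancel δ a⟩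
  · rw [if_neg haSg] at ha_ht
    have htot := R.ht_sub subset_rfl hδ ha hsub
    rw [R.ht_simple subset_rfl ha0, if_pos ha0] at htot
    exact R.isSumOfTwoOfHt_one_of_sub hSg hδ ha hsub h2 ha_ht (ih _ (by omega) hsub (by omega) rfl)

theorem isSumOfTwoOfHt_neg_one_of_ht_neg_two (hSg : Sg ⊆ R.Δ0) {δ : V} (hδ : δ ∈ R.Δ)
    (h2 : R.ht Sg δ = -2) : R.IsSumOfTwoOfHt Sg (-1) δ := by
  obtain ⟨β, hβ, γ, hγ, hβ1, hγ1, hβγ⟩ :=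
    R.isSumOfTwoOfHt_one_of_ht_two hSg (R.neg_mem δ hδ) (by rw [R.ht_neg hSg hδ, h2]; rfl)
  refine ⟨-β, R.neg_mem β hβ, -γ, R.neg_mem γ hγ, ?_, ?_, ?_⟩
  · rw [R.ht_neg hSg hβ, hβ1]
  · rw [R.ht_neg hSg hγ, hγ1]
  · rw [← neg_add, hβγ, neg_neg]

end RootSystemBase

lemma exists_injOn_inner {V : Type*} [NormedAddCommGroup V] [InnerProductSpace ℝ V]
    (F : Finset V) : ∃ w : V, Set.InjOn (fun β => ⟪β, w⟫) F := by
  let p : F.offDiag → Submodule ℝ V := fun d => LinearMap.ker (innerₛₗ ℝ (d.1.1 - d.1.2))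
  have hp : ∀ d, p d ≠ ⊤ := by
    rintro ⟨d, hd⟩ htop
    have hmem : d.1 - d.2 ∈ p ⟨d, hd⟩ := htop ▸ Submodule.mem_top
    have hne : d.1 - d.2 ≠ 0 := sub_ne_zero.mpr (Finset.mem_offDiag.mp hd).2.2
    exact hne (inner_self_eq_zero.mp hmem)
  obtain ⟨w, -, hw⟩ := Set.exists_of_ssubset <|
    Submodule.iUnion_ssubset_of_forall_ne_top_of_card_lt Finset.univ p hp
      (by rw [ENat.card_eq_top_of_infinite]; exact ENat.natCast_lt_top _)
  refine ⟨w, fun β hβ γ hγ hβγ => by_contra fun hne => hw ?_⟩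
  refine Set.mem_biUnion (Finset.mem_univ ⟨(β, γ), Finset.mem_offDiag.mpr ⟨hβ, hγ, hne⟩⟩) ?_
  simpa [p, inner_sub_left, sub_eq_zero] using hβγ

lemma Submodule.mem_of_sum_mem_of_apply_eq_smul {K M ι : Type*} [Field K] [AddCommGroup M]
    [Module K M] {T : Module.End K M} {Y : Submodule K M} (hY : ∀ y ∈ Y, T y ∈ Y)
    {c : ι → K} {f : ι → M} {s : Finset ι} (hc : Set.InjOn c s)
    (hf : ∀ i ∈ s, T (f i) = c i • f i) (hsum : ∑ i ∈ s, f i ∈ Y) : ∀ i ∈ s, f i ∈ Y := by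
  classical
  induction s using Finset.induction_on generalizing f with
  | empty => simp
  | insert i₀ s hi₀ ih =>
    rw [Finset.sum_insert hi₀] at hsum
    -- `T - c i₀` kills `f i₀` and rescales the other summands by nonzero factors.
    have hrest : ∀ i ∈ s, (c i - c i₀) • f i ∈ Y := by
      refine ih (f := fun i => (c i - c i₀) • f i) (hc.mono (by simp))
        (fun i hi => by rw [map_smul, hf i (by simp [hi]), smul_comm]) ?_
      have := Y.sub_mem (hY _ hsum) (Y.smul_mem (c i₀) hsum)
      rw [map_add, hf i₀ (by simp), map_sum, smul_add, Finset.smul_sum, add_sub_add_comm,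
        sub_self, zero_add, ← Finset.sum_sub_distrib] at this
      convert this using 1
      exact Finset.sum_congr rfl fun i hi => by rw [hf i (by simp [hi]), sub_smul]
    have hs : ∀ i ∈ s, f i ∈ Y := fun i hi => by
      have hne : c i - c i₀ ≠ 0 := sub_ne_zero.mpr fun h =>
        hi₀ (hc (by simp [hi]) (by simp) h ▸ hi)
      exact (Y.smul_mem_iff hne).mp (hrest i hi)
    intro i hi
    rcases Finset.mem_insert.mp hi with rfl | hi
    · exact (Y.add_mem_iff_left (Y.sum_mem hs)).mp hsum
    · exact hs i hi

lemma Submodule.sup_span_singleton_eq_of_finrank_eq_succ {K E : Type*} [Field K]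
    [AddCommGroup E] [Module K E] [FiniteDimensional K E] {p q : Submodule K E} (hpq : p ≤ q)
    (hrank : Module.finrank K p + 1 = Module.finrank K q) {x : E} (hxq : x ∈ q) (hxp : x ∉ p) :
    p ⊔ K ∙ x = q :=
  Submodule.eq_of_le_of_finrank_eq (sup_le hpq ((Submodule.span_singleton_le_iff_mem _ _).mpr hxq))
    (by rw [Submodule.finrank_sup_span_singleton hxp, hrank])

section AbelianSubalgebra

variable {K L : Type*} [Field K] [LieRing L] [LieAlgebra K L] {Y : Submodule K L}

lemma lie_mem_map_ad_of_mem_sup_span (hY : ∀ a ∈ Y, ∀ b ∈ Y, ⁅a, b⁆ = 0) {x v w : L}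
    (hv : v ∈ Y ⊔ K ∙ x) (hw : w ∈ Y ⊔ K ∙ x) : ⁅v, w⁆ ∈ Y.map (LieAlgebra.ad K L x) := by
  obtain ⟨y, hy, _, hz, rfl⟩ := Submodule.mem_sup.mp hv
  obtain ⟨c, rfl⟩ := Submodule.mem_span_singleton.mp hz
  obtain ⟨y', hy', _, hz', rfl⟩ := Submodule.mem_sup.mp hw
  obtain ⟨c', rfl⟩ := Submodule.mem_span_singleton.mp hz'
  have hexp : ⁅y + c • x, y' + c' • x⁆ = c • ⁅x, y'⁆ - c' • ⁅x, y⁆ := by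
    rw [lie_add, add_lie, add_lie, hY y hy y' hy', lie_smul, lie_smul, smul_lie, smul_lie,
      lie_self, smul_zero, smul_zero, ← lie_skew x y]
    module
  rw [hexp]
  exact Submodule.sub_mem _ (Submodule.smul_mem _ _ ⟨y', hy', rfl⟩)
    (Submodule.smul_mem _ _ ⟨y, hy, rfl⟩)

lemma map_ad_le_span_of_lie_notMem (hY : ∀ a ∈ Y, ∀ b ∈ Y, ⁅a, b⁆ = 0) {u x y : L}
    (hu : ∀ y' ∈ Y, ⁅u, y'⁆ ∈ Y ⊔ K ∙ x) (hy : y ∈ Y) (huy : ⁅u, y⁆ ∉ Y) :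
    Y.map (LieAlgebra.ad K L x) ≤ K ∙ ⁅x, y⁆ := by
  rintro _ ⟨y', hy', rfl⟩
  obtain ⟨y₀, hy₀, _, hz, hsum⟩ := Submodule.mem_sup.mp (hu y hy)
  obtain ⟨c, rfl⟩ := Submodule.mem_span_singleton.mp hz
  obtain ⟨y₀', hy₀', _, hz', hsum'⟩ := Submodule.mem_sup.mp (hu y' hy')
  obtain ⟨c', rfl⟩ := Submodule.mem_span_singleton.mp hz'
  have hc : c ≠ 0 := by rintro rfl; rw [← hsum, zero_smul, add_zero] at huy; exact huy hy₀
  -- Jacobi: `0 = ⁅u, ⁅y, y'⁆⁆ = ⁅⁅u, y⁆, y'⁆ + ⁅y, ⁅u, y'⁆⁆ = c • ⁅x, y'⁆ - c' • ⁅x, y⁆`.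
  have hjac := leibniz_lie u y y'
  rw [hY y hy y' hy', lie_zero, ← hsum, ← hsum', add_lie, lie_add, hY y₀ hy₀ y' hy',
    hY y hy y₀' hy₀', smul_lie, lie_smul, neg_eq_iff_eq_neg.mp (lie_skew x y), zero_add,
    zero_add, smul_neg, ← sub_eq_add_neg, eq_comm, sub_eq_zero] at hjac
  refine Submodule.mem_span_singleton.mpr ⟨c⁻¹ * c', ?_⟩
  rw [LieAlgebra.ad_apply, mul_smul, inv_smul_eq_iff₀ hc, hjac]

lemma lie_mem_of_two_le_finrank_map_ad [FiniteDimensional K L]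
    (hY : ∀ a ∈ Y, ∀ b ∈ Y, ⁅a, b⁆ = 0) {u x : L}
    (hx : 2 ≤ Module.finrank K (Y.map (LieAlgebra.ad K L x)))
    (hu : ∀ y ∈ Y, ⁅u, y⁆ ∈ Y ⊔ K ∙ x) : ∀ y ∈ Y, ⁅u, y⁆ ∈ Y := by
  intro y hy
  by_contra huy
  have hle := Submodule.finrank_mono (map_ad_le_span_of_lie_notMem hY hu hy huy)
  have := finrank_span_le_card (R := K) ({⁅x, y⁆} : Set L)
  simp only [Set.toFinset_singleton, Finset.card_singleton] at this
  omega

end AbelianSubalgebra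

namespace GradedLieData

variable {V : Type*} [NormedAddCommGroup V] [InnerProductSpace ℝ V]
variable {L : Type*} [LieRing L] [LieAlgebra ℂ L] (G : GradedLieData V L) {Sg : Finset V}

lemma g_of_ne_zero {j : ℤ} (hj : j ≠ 0) :
    G.g Sg j = ⨆ β ∈ G.base.Δ.filter (fun β => G.base.ht Sg β = j), G.rs β :=
  if_neg hj

lemma g_zero : G.g Sg 0 = G.H ⊔ ⨆ β ∈ G.base.Δ.filter (fun β => G.base.ht Sg β = 0), G.rs β :=
  if_pos rfl

lemma H_le_g_zero : G.H ≤ G.g Sg 0 := G.g_zero ▸ le_sup_left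

lemma rs_le_g {β : V} (hβ : β ∈ G.base.Δ) {j : ℤ} (hβj : G.base.ht Sg β = j) :
    G.rs β ≤ G.g Sg j := by
  have hle : G.rs β ≤ ⨆ β ∈ G.base.Δ.filter (fun β => G.base.ht Sg β = j), G.rs β :=
    le_iSup₂ (f := fun β _ => G.rs β) β (Finset.mem_filter.mpr ⟨hβ, hβj⟩)
  by_cases hj : j = 0
  · subst hj
    exact G.g_zero ▸ hle.trans le_sup_right
  · exact G.g_of_ne_zero hj ▸ hle

lemma exists_mem_rs_ne_zero {β : V} (hβ : β ∈ G.base.Δ) : ∃ e ∈ G.rs β, e ≠ 0 :=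
  Submodule.exists_mem_ne_zero_of_ne_bot fun h => by
    have h1 := G.rs_dim β hβ
    rw [h, finrank_bot] at h1
    exact zero_ne_one h1

lemma disjoint_rs_iSup {β : V} (hβ : β ∈ G.base.Δ) {s : Finset V} (hs : s ⊆ G.base.Δ)
    (hβs : β ∉ s) : Disjoint (G.rs β) (⨆ γ ∈ s, G.rs γ) :=
  (G.rs_indep β hβ).mono_right <| iSup₂_le fun γ hγ =>
    (le_iSup₂ (f := fun γ _ => G.rs γ) γ
      (Finset.mem_erase.mpr ⟨by rintro rfl; exact hβs hγ, hs hγ⟩)).trans le_sup_right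

lemma lie_rs_mem_g (hSg : Sg ⊆ G.base.Δ0) {α β : V} (hα : α ∈ G.base.Δ) (hβ : β ∈ G.base.Δ)
    {i j : ℤ} (hαi : G.base.ht Sg α = i) (hβj : G.base.ht Sg β = j) (hij : i + j ≠ 0)
    {e x : L} (he : e ∈ G.rs α) (hx : x ∈ G.rs β) : ⁅e, x⁆ ∈ G.g Sg (i + j) := by
  by_cases hr : α + β ∈ G.base.Δ
  · exact G.rs_le_g hr (by rw [G.base.ht_add hSg hα hβ hr, hαi, hβj])
      (G.br_rs_mem α hα β hβ hr e he x hx)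
  · have hne : α + β ≠ 0 := fun h => by
      rw [eq_neg_of_add_eq_zero_right h, G.base.ht_neg hSg hα, hαi] at hβj
      omega
    rw [G.br_rs_zero α hα β hβ hr hne e he x hx]
    exact Submodule.zero_mem _

lemma lie_mem_of_mem_g_zero {X N : Submodule ℂ L} (hH : ∀ h ∈ G.H, ∀ x ∈ X, ⁅h, x⁆ ∈ N)
    (hrs : ∀ α ∈ G.base.Δ, G.base.ht Sg α = 0 → ∀ e ∈ G.rs α, ∀ x ∈ X, ⁅e, x⁆ ∈ N) :
    ∀ u ∈ G.g Sg 0, ∀ x ∈ X, ⁅u, x⁆ ∈ N := by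
  intro u hu x hx
  rw [g_zero] at hu
  obtain ⟨h, hh, v, hv, rfl⟩ := Submodule.mem_sup.mp hu
  obtain ⟨f, rfl⟩ := (Submodule.mem_iSup_finset_iff_exists_sum _ v).mp hv
  rw [add_lie, sum_lie]
  refine N.add_mem (hH h hh x hx) (N.sum_mem fun α hα => ?_)
  obtain ⟨hαΔ, hα0⟩ := Finset.mem_filter.mp hα
  exact hrs α hαΔ hα0 _ (f α).2 x hx

lemma lie_mem_g_of_mem_g_zero (hSg : Sg ⊆ G.base.Δ0) {j : ℤ} (hj : j ≠ 0) :
    ∀ u ∈ G.g Sg 0, ∀ v ∈ G.g Sg j, ⁅u, v⁆ ∈ G.g Sg j := by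
  intro u hu v hv
  rw [G.g_of_ne_zero hj] at hv
  obtain ⟨f, rfl⟩ := (Submodule.mem_iSup_finset_iff_exists_sum _ v).mp hv
  rw [lie_sum]
  refine Submodule.sum_mem _ fun β hβ => ?_
  obtain ⟨hβΔ, hβj⟩ := Finset.mem_filter.mp hβ
  refine G.lie_mem_of_mem_g_zero (X := G.rs β) ?_ ?_ u hu _ (f β).2
  · exact fun h hh x hx => G.rs_le_g hβΔ hβj (G.br_h_rs β hβΔ h hh x hx)
  · intro α hα hα0 e he x hx
    simpa using G.lie_rs_mem_g hSg hα hβΔ hα0 hβj (by simpa) he hx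

lemma lie_mem_rs_of_mem_g_zero (hSg : Sg ⊆ G.base.Δ0) {j : ℤ} (hj : j ≠ 0) {μ : V}
    (hμ : μ ∈ G.base.Δ) (hμj : G.base.ht Sg μ = j) {Y : Submodule ℂ L}
    (hY : ∀ u ∈ G.g Sg 0, ∀ y ∈ Y, ⁅u, y⁆ ∈ Y)
    (hrsY : ∀ β ∈ G.base.Δ, G.base.ht Sg β = j → β ≠ μ → G.rs β ≤ Y)
    (hdisj : Disjoint (G.rs μ) Y) : ∀ u ∈ G.g Sg 0, ∀ x ∈ G.rs μ, ⁅u, x⁆ ∈ G.rs μ := by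
  refine G.lie_mem_of_mem_g_zero (fun h hh x hx => G.br_h_rs μ hμ h hh x hx) ?_
  intro α hα hα0 e he x hx
  by_cases hr : α + μ ∈ G.base.Δ
  · -- Then `⁅𝔤_{-α}, 𝔤_{α+μ}⁆ = 𝔤_μ` would lie in `Y`.
    exfalso
    have hnα := G.base.neg_mem α hα
    have hrsY' : G.rs (α + μ) ≤ Y := hrsY _ hr
      (by rw [G.base.ht_add hSg hα hμ hr, hα0, hμj, zero_add])
      (fun h => G.base.ne_zero α hα (add_eq_right.mp h))
    have hsum : -α + (α + μ) = μ := neg_add_cancel_left α μ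
    have hμ' : -α + (α + μ) ∈ G.base.Δ := by rwa [hsum]
    obtain ⟨e', he', he'ne⟩ := G.exists_mem_rs_ne_zero hnα
    obtain ⟨f, hf, hfne⟩ := G.exists_mem_rs_ne_zero hr
    have hbr := G.br_rs_mem _ hnα _ hr hμ' e' he' f hf
    rw [hsum] at hbr
    have hbrY := hY e' (G.rs_le_g hnα (by rw [G.base.ht_neg hSg hα, hα0, neg_zero]) he') f
      (hrsY' hf)
    exact (G.br_nondeg _ hnα _ hr hμ' e' he' f hf
      (Submodule.disjoint_def.mp hdisj _ hbr hbrY)).elim he'ne hfne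
  · have hne : α + μ ≠ 0 := fun h => by
      rw [eq_neg_of_add_eq_zero_right h, G.base.ht_neg hSg hα, hα0] at hμj
      omega
    rw [G.br_rs_zero α hα μ hμ hr hne e he x hx]
    exact Submodule.zero_mem _

variable [FiniteDimensional ℂ L]

lemma rs_eq_span_singleton {β : V} (hβ : β ∈ G.base.Δ) {e : L} (he : e ∈ G.rs β)
    (hne : e ≠ 0) : G.rs β = ℂ ∙ e :=
  (Submodule.eq_of_le_of_finrank_le ((Submodule.span_singleton_le_iff_mem _ _).mpr he)
    (by rw [G.rs_dim β hβ, finrank_span_singleton hne])).symm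

lemma finrank_iSup_rs {s : Finset V} (hs : s ⊆ G.base.Δ) :
    Module.finrank ℂ ↥(⨆ β ∈ s, G.rs β) = s.card := by
  classical
  induction s using Finset.induction_on with
  | empty => simp
  | insert β s hβ ih =>
    have hβΔ := hs (Finset.mem_insert_self β s)
    have hsΔ : s ⊆ G.base.Δ := (Finset.subset_insert β s).trans hs
    have hrank := Submodule.finrank_sup_add_finrank_inf_eq (G.rs β) (⨆ γ ∈ s, G.rs γ)
    rw [(G.disjoint_rs_iSup hβΔ hsΔ hβ).eq_bot, finrank_bot, add_zero, G.rs_dim β hβΔ,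
      ih hsΔ] at hrank
    rw [Finset.iSup_insert, hrank, Finset.card_insert_of_notMem hβ, add_comm]

lemma g_neg_two_le (hSg : Sg ⊆ G.base.Δ0) {N : Submodule ℂ L}
    (hN : ∀ v ∈ G.g Sg (-1), ∀ w ∈ G.g Sg (-1), ⁅v, w⁆ ∈ N) : G.g Sg (-2) ≤ N := by
  rw [G.g_of_ne_zero (by norm_num)]
  refine iSup₂_le fun δ hδ => ?_
  obtain ⟨hδΔ, hδ2⟩ := Finset.mem_filter.mp hδ
  obtain ⟨β, hβ, γ, hγ, hβ1, hγ1, rfl⟩ :=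
    G.base.isSumOfTwoOfHt_neg_one_of_ht_neg_two hSg hδΔ hδ2
  obtain ⟨e, he, hene⟩ := G.exists_mem_rs_ne_zero hβ
  obtain ⟨f, hf, hfne⟩ := G.exists_mem_rs_ne_zero hγ
  have hef : ⁅e, f⁆ ≠ 0 := fun h => (G.br_nondeg β hβ γ hγ hδΔ e he f hf h).elim hene hfne
  rw [G.rs_eq_span_singleton hδΔ (G.br_rs_mem β hβ γ hγ hδΔ e he f hf) hef,
    Submodule.span_singleton_le_iff_mem]
  exact hN e (G.rs_le_g hβ hβ1 he) f (G.rs_le_g hγ hγ1 hf)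

theorem lie_mem_of_mem_g_zero_of_abelian (hSg : Sg ⊆ G.base.Δ0)
    (hdim : 2 < Module.finrank ℂ ↥(G.g Sg (-1))) {Y : Submodule ℂ L} (hY1 : Y ≤ G.g Sg (-1))
    (hYab : ∀ a ∈ Y, ∀ b ∈ Y, ⁅a, b⁆ = (0 : L))
    (hYcodim : Module.finrank ℂ ↥Y + 1 = Module.finrank ℂ ↥(G.g Sg (-1)))
    (hYdim : Module.finrank ℂ ↥(G.g Sg (-2)) = Module.finrank ℂ ↥Y) :
    ∀ u ∈ G.g Sg 0, ∀ y ∈ Y, ⁅u, y⁆ ∈ Y := by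
  obtain ⟨x, hxg, hxY⟩ := SetLike.exists_of_lt (lt_of_le_of_ne hY1 (by rintro rfl; omega))
  have hspan := Submodule.sup_span_singleton_eq_of_finrank_eq_succ hY1 hYcodim hxg hxY
  have hg2 : G.g Sg (-2) ≤ Y.map (LieAlgebra.ad ℂ L x) := G.g_neg_two_le hSg fun v hv w hw =>
    lie_mem_map_ad_of_mem_sup_span hYab (hspan ▸ hv) (hspan ▸ hw)
  intro u hu
  refine lie_mem_of_two_le_finrank_map_ad (x := x) hYab ?_ fun y hy => ?_
  · have := Submodule.finrank_mono hg2
    omega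
  · rw [hspan]
    exact G.lie_mem_g_of_mem_g_zero hSg (by norm_num) u hu y (hY1 hy)

lemma eq_iSup_rs_filter_of_lie_toH_mem {F : Finset V} (hF : F ⊆ G.base.Δ) {Y : Submodule ℂ L}
    (hYF : Y ≤ ⨆ β ∈ F, G.rs β) (hY : ∀ w : V, ∀ y ∈ Y, ⁅G.toH w, y⁆ ∈ Y) :
    Y = ⨆ β ∈ F.filter (fun β => G.rs β ≤ Y), G.rs β := by
  refine le_antisymm (fun y hy => ?_) (iSup₂_le fun β hβ => (Finset.mem_filter.mp hβ).2)
  obtain ⟨f, hf⟩ := (Submodule.mem_iSup_finset_iff_exists_sum _ y).mp (hYF hy)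
  -- `ad (toH w)` acts on `rs β` by `⟪β, w⟫`, and `w` is chosen to separate the roots in `F`.
  obtain ⟨w, hw⟩ := exists_injOn_inner F
  have hcomp : ∀ β ∈ F, (f β : L) ∈ Y :=
    Submodule.mem_of_sum_mem_of_apply_eq_smul (T := LieAlgebra.ad ℂ L (G.toH w)) (hY w)
      (c := fun β => ((⟪β, w⟫ : ℝ) : ℂ)) (fun β hβ γ hγ h => hw hβ hγ (Complex.ofReal_inj.mp h))
      (fun β hβ => G.br_toH w β (hF hβ) _ (f β).2) (hf ▸ hy)
  rw [← hf]
  refine Submodule.sum_mem _ fun β hβ => ?_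
  by_cases h0 : (f β : L) = 0
  · rw [h0]
    exact Submodule.zero_mem _
  have hβY : G.rs β ≤ Y := by
    rw [G.rs_eq_span_singleton (hF hβ) (f β).2 h0, Submodule.span_singleton_le_iff_mem]
    exact hcomp β hβ
  exact le_iSup₂ (f := fun β _ => G.rs β) β (Finset.mem_filter.mpr ⟨hβ, hβY⟩) (f β).2

theorem exists_invariant_rs_complement (hSg : Sg ⊆ G.base.Δ0) {j : ℤ} (hj : j ≠ 0)
    {Y : Submodule ℂ L} (hYj : Y ≤ G.g Sg j) (hY : ∀ u ∈ G.g Sg 0, ∀ y ∈ Y, ⁅u, y⁆ ∈ Y)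
    (hYcodim : Module.finrank ℂ ↥Y + 1 = Module.finrank ℂ ↥(G.g Sg j)) :
    ∃ X : Submodule ℂ L, Module.finrank ℂ ↥X = 1 ∧
      (∀ u ∈ G.g Sg 0, ∀ x ∈ X, ⁅u, x⁆ ∈ X) ∧ X ⊔ Y = G.g Sg j ∧ X ⊓ Y = ⊥ := by
  set F := G.base.Δ.filter (fun β => G.base.ht Sg β = j)
  have hF : F ⊆ G.base.Δ := Finset.filter_subset _ _
  have hgF : G.g Sg j = ⨆ β ∈ F, G.rs β := G.g_of_ne_zero hj
  set S := F.filter (fun β => G.rs β ≤ Y)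
  have hSF : S ⊆ F := Finset.filter_subset _ _
  have hYS : Y = ⨆ β ∈ S, G.rs β := G.eq_iSup_rs_filter_of_lie_toH_mem hF (hgF ▸ hYj)
    fun w => hY _ (G.H_le_g_zero (G.toH_mem w))
  obtain ⟨μ, hμ⟩ : ∃ μ, F \ S = {μ} := by
    rw [← Finset.card_eq_one, Finset.card_sdiff_of_subset hSF]
    have hcardF := G.finrank_iSup_rs hF
    have hcardS := G.finrank_iSup_rs (hSF.trans hF)
    rw [← hgF] at hcardF
    rw [← hYS] at hcardS
    omega
  obtain ⟨hμF, hμS⟩ := Finset.mem_sdiff.mp (hμ ▸ Finset.mem_singleton_self μ)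
  obtain ⟨hμΔ, hμj⟩ := Finset.mem_filter.mp hμF
  have hFS : F = insert μ S := by rw [← Finset.sdiff_union_of_subset hSF, hμ]; rfl
  have hdisj : Disjoint (G.rs μ) Y := hYS ▸ G.disjoint_rs_iSup hμΔ (hSF.trans hF) hμS
  refine ⟨G.rs μ, G.rs_dim μ hμΔ, G.lie_mem_rs_of_mem_g_zero hSg hj hμΔ hμj hY ?_ hdisj, ?_,
    hdisj.eq_bot⟩
  · intro β hβ hβj hβμ
    have hβF : β ∈ F := Finset.mem_filter.mpr ⟨hβ, hβj⟩
    rw [hFS] at hβF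
    exact (Finset.mem_filter.mp ((Finset.mem_insert.mp hβF).resolve_left hβμ)).2
  · rw [hgF, hFS, Finset.iSup_insert, ← hYS]

end GradedLieData

theorem statement2_general {V : Type*} [NormedAddCommGroup V] [InnerProductSpace ℝ V]
    {L : Type*} [LieRing L] [LieAlgebra ℂ L] [FiniteDimensional ℂ L]
    (G : GradedLieData V L) (Sg : Finset V) (hSg : Sg ⊆ G.base.Δ0)
    (hdim : 2 < Module.finrank ℂ ↥(G.g Sg (-1)))
    (Y : Submodule ℂ L) (hY1 : Y ≤ G.g Sg (-1))
    (hYab : ∀ a ∈ Y, ∀ b ∈ Y, ⁅a, b⁆ = (0 : L))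
    (hYcodim : Module.finrank ℂ ↥Y + 1 = Module.finrank ℂ ↥(G.g Sg (-1)))
    (hYdim : Module.finrank ℂ ↥(G.g Sg (-2)) = Module.finrank ℂ ↥Y) :
    (∀ u ∈ G.g Sg 0, ∀ y ∈ Y, ⁅u, y⁆ ∈ Y) ∧
    ∃ X : Submodule ℂ L, Module.finrank ℂ ↥X = 1 ∧
      (∀ u ∈ G.g Sg 0, ∀ x ∈ X, ⁅u, x⁆ ∈ X) ∧
      X ⊔ Y = G.g Sg (-1) ∧ X ⊓ Y = ⊥ := by
  have hY := G.lie_mem_of_mem_g_zero_of_abelian hSg hdim hY1 hYab hYcodim hYdim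
  exact ⟨hY, G.exists_invariant_rs_complement hSg (by norm_num) hY1 hY hYcodim⟩

/-- For a grading of Monge type of a complex semisimple Lie algebra
with `dim 𝔤₋₁ > 2`, the codimension-one abelian subalgebra `Y ⊆ 𝔤₋₁` is invariant under
the adjoint action of `𝔤₀`, and it admits a one-dimensional `𝔤₀`-invariant complement
`X` in `𝔤₋₁`. -/
theorem statement2 {V : Type*} [NormedAddCommGroup V] [InnerProductSpace ℝ V]
    {L : Type*} [LieRing L] [LieAlgebra ℂ L] [FiniteDimensional ℂ L]
    (G : GradedLieData V L) (Sg : Finset V) (hSg : Sg ⊆ G.base.Δ0) (hne : Sg.Nonempty)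
    (hdim : 2 < Module.finrank ℂ ↥(G.g Sg (-1)))
    (Y : Submodule ℂ L) (hY1 : Y ≤ G.g Sg (-1)) (hY0 : Y ≠ ⊥)
    (hYab : ∀ a ∈ Y, ∀ b ∈ Y, ⁅a, b⁆ = (0 : L))
    (hYcodim : Module.finrank ℂ ↥Y + 1 = Module.finrank ℂ ↥(G.g Sg (-1)))
    (hYdim : Module.finrank ℂ ↥(G.g Sg (-2)) = Module.finrank ℂ ↥Y) :
    (∀ u ∈ G.g Sg 0, ∀ y ∈ Y, ⁅u, y⁆ ∈ Y) ∧
    ∃ X : Submodule ℂ L, Module.finrank ℂ ↥X = 1 ∧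
      (∀ u ∈ G.g Sg 0, ∀ x ∈ X, ⁅u, x⁆ ∈ X) ∧
      X ⊔ Y = G.g Sg (-1) ∧ X ⊓ Y = ⊥ :=
  statement2_general G Sg hSg hdim Y hY1 hYab hYcodim hYdim
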